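/- arXiv:1111.6522 — 5 statements merged into one kernel-verified Lean document; each statement's English description precedes it below -/
import Mathlib

section
/- Let D be a C-bialgebra, A a C-algebra with D-module algebra structure Ψ and associated map ρ : A → Hom_C(D,A), ρ(a)(d) = Ψ(d ⊗ a). Then ρ is a homomorphism of D-module algebras from (A, Ψ) to (Hom_C(D,A), Ψ_int). Moreover, ρ is universal: for every C-algebra B and every homomorphism of D-module algebras Λ : (A,Ψ) → (Hom_C(D,B), Ψ_int) there exists a unique C-algebra homomorphism λ : A → B with Λ = Hom_C(D,λ) ∘ ρ. -/
open TensorProduct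

section Defs

variable (C D : Type*) [CommRing C] [Ring D] [Bialgebra C D]

/-- The convolution product on `Hom_C(D, A)`. -/
noncomputable def conv {A : Type*} [Ring A] [Algebra C A] (f g : D →ₗ[C] A) : D →ₗ[C] A :=
  LinearMap.mul' C A ∘ₗ TensorProduct.map f g ∘ₗ Coalgebra.comul (R := C)

/-- The unit of the convolution algebra: `η_A ∘ ε_D`. -/
noncomputable def convOne {A : Type*} [Ring A] [Algebra C A] : D →ₗ[C] A :=
  Algebra.linearMap C A ∘ₗ Coalgebra.counit (R := C)

/-- The internal action `Ψ_int(d ⊗ f)(d̃) = f(d̃ d)` on `Hom_C(D, A)`. -/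
noncomputable def psiInt {A : Type*} [AddCommGroup A] [Module C A]
    (d : D) (f : D →ₗ[C] A) : D →ₗ[C] A :=
  f ∘ₗ LinearMap.mulRight C d

variable (A : Type*) [Ring A] [Algebra C A]

/-- A `D`-module algebra structure on a `C`-algebra `A`. -/
structure ModuleAlgebraStructure where
  act : D →ₗ[C] A →ₗ[C] A
  act_one : act 1 = LinearMap.id
  act_mul : ∀ d e : D, act (d * e) = act d ∘ₗ act e
  measure_mul : ∀ (d : D) (a b : A),
    act d (a * b) = conv C D (act.flip a) (act.flip b) d
  measure_one : ∀ d : D, act d 1 = Coalgebra.counit (R := C) d • (1 : A)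

end Defs

/-- for a `D`-module algebra `(A, Ψ)`, the associated map
`ρ : A → Hom_C(D,A)`, `ρ(a)(d) = Ψ(d ⊗ a)` (i.e. `ρ = Ψ.flip`), is a homomorphism of
`D`-module algebras from `(A,Ψ)` to `(Hom_C(D,A), Ψ_int)` (it is `C`-linear, an algebra
homomorphism for the convolution structure, and `D`-equivariant), and it is universal:
for every `C`-algebra `B` and every homomorphism of `D`-module algebras
`Λ : (A,Ψ) → (Hom_C(D,B), Ψ_int)` there is a unique `C`-algebra homomorphism
`λ : A → B` with `Λ = Hom_C(D,λ) ∘ ρ`. -/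
theorem rho_universal (C D A : Type*) [CommRing C] [Ring D] [Bialgebra C D]
    [Ring A] [Algebra C A] (S : ModuleAlgebraStructure C D A) :
    ((∀ a b : A, S.act.flip (a * b) = conv C D (S.act.flip a) (S.act.flip b)) ∧
      S.act.flip 1 = convOne C D ∧
      (∀ (d : D) (a : A), S.act.flip (S.act d a) = psiInt C D d (S.act.flip a))) ∧
    (∀ (B : Type) [Ring B] [Algebra C B] (Λ : A →ₗ[C] (D →ₗ[C] B)),
      (∀ a b : A, Λ (a * b) = conv C D (Λ a) (Λ b)) →
      Λ 1 = convOne C D →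
      (∀ (d : D) (a : A), Λ (S.act d a) = psiInt C D d (Λ a)) →
      ∃! l : A →ₐ[C] B, ∀ a : A, Λ a = l.toLinearMap ∘ₗ S.act.flip a) := by
  constructor
  · refine ⟨fun a b => ?_, ?_, fun d a => ?_⟩
    · ext d; exact S.measure_mul d a b
    · ext d
      simpa [convOne, Algebra.smul_def, mul_comm] using S.measure_one d
    · ext e
      simp only [LinearMap.flip_apply, psiInt, LinearMap.comp_apply,
        LinearMap.mulRight_apply, S.act_mul]
  · intro B _ _ Λ hmul hone hact
    refine ⟨AlgHom.ofLinearMap ((LinearMap.applyₗ (1 : D)).comp Λ) ?_ ?_, fun a => ?_, ?_⟩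
    · show Λ 1 1 = 1
      rw [hone]
      simp [convOne, Bialgebra.counit_one]
    · intro a b
      show Λ (a * b) 1 = Λ a 1 * Λ b 1
      rw [hmul]
      simp [conv, Bialgebra.comul_one, Algebra.TensorProduct.one_def]
    · ext d
      show Λ a d = Λ (S.act d a) 1
      rw [hact]
      simp [psiInt]
    · intro l' hl'
      ext a
      have := congrArg (fun f => f 1) (hl' a)
      simp only [LinearMap.comp_apply, LinearMap.flip_apply, S.act_one,
        LinearMap.id_apply] at this
      exact this.symm
end

section
/- Let D be a C-bialgebra and (A, Ψ_A) a simple commutative D-module algebra (no nonzero proper D-stable ideals). Then the ring of constants A^{Ψ_A} = { a ∈ A : Ψ_A(d ⊗ a) = ε(d)a for all d ∈ D } is a field. -/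
open TensorProduct

/-- if `(A, Ψ_A)` is a simple commutative `D`-module algebra over a field `C`
(i.e. `A ≠ 0` and the only `D`-stable ideals of `A` are `0` and `A`), then the ring of
constants `A^{Ψ_A} = { a | Ψ_A(d ⊗ a) = ε(d)a ∀ d }` is a field: `0 ≠ 1` in `A` and every
nonzero constant has a (constant) multiplicative inverse. -/
theorem constants_of_simple_module_algebra_isField
    (C D A : Type*) [Field C] [Ring D] [Bialgebra C D] [CommRing A] [Algebra C A]
    [Nontrivial A] (ΨA : ModuleAlgebraStructure C D A)
    (hsimple : ∀ I : Ideal A, (∀ (d : D), ∀ a ∈ I, ΨA.act d a ∈ I) → I = ⊥ ∨ I = ⊤) :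
    (0 : A) ≠ 1 ∧
    ∀ a : A, (∀ d : D, ΨA.act d a = Coalgebra.counit (R := C) d • a) → a ≠ 0 →
      ∃ b : A, (∀ d : D, ΨA.act d b = Coalgebra.counit (R := C) d • b) ∧ a * b = 1 := by
  have key : ∀ a : A, (∀ d : D, ΨA.act d a = Coalgebra.counit (R := C) d • a) →
      ∀ (d : D) (x : A), ΨA.act d (a * x) = a * ΨA.act d x := by
    intro a ha d x
    rw [ΨA.measure_mul]
    have hf : ΨA.act.flip a =
        LinearMap.toSpanSingleton C A a ∘ₗ Coalgebra.counit (R := C) := by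
      ext e
      simp [LinearMap.flip_apply, ha e, LinearMap.toSpanSingleton_apply]
    have hmap : TensorProduct.map (ΨA.act.flip a) (ΨA.act.flip x)
        = TensorProduct.map (LinearMap.toSpanSingleton C A a) (ΨA.act.flip x) ∘ₗ
            LinearMap.rTensor D (Coalgebra.counit (R := C)) := by
      rw [hf, LinearMap.rTensor, ← TensorProduct.map_comp, LinearMap.comp_id]
    show (LinearMap.mul' C A ∘ₗ TensorProduct.map (ΨA.act.flip a) (ΨA.act.flip x) ∘ₗ
        Coalgebra.comul (R := C)) d = _
    rw [LinearMap.comp_apply, LinearMap.comp_apply, hmap, LinearMap.comp_apply,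
      Coalgebra.rTensor_counit_comul, TensorProduct.map_tmul, LinearMap.mul'_apply,
      LinearMap.toSpanSingleton_apply, one_smul, LinearMap.flip_apply]
  refine ⟨zero_ne_one, fun a ha ha0 => ?_⟩
  have hstab : ∀ (d : D), ∀ y ∈ Ideal.span {a}, ΨA.act d y ∈ Ideal.span {a} := by
    intro d y hy
    rw [Ideal.mem_span_singleton] at hy ⊢
    obtain ⟨x, rfl⟩ := hy
    exact ⟨ΨA.act d x, key a ha d x⟩
  rcases hsimple _ hstab with h | h
  · exact absurd (Ideal.span_singleton_eq_bot.mp h) ha0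
  · have : (1 : A) ∈ Ideal.span {a} := h ▸ Submodule.mem_top
    obtain ⟨b, hb⟩ := Ideal.mem_span_singleton.mp this
    refine ⟨b, fun d => ?_, hb.symm⟩
    have h1 : a * ΨA.act d b = Coalgebra.counit (R := C) d • (1 : A) := by
      rw [← key a ha d b, ← hb, ΨA.measure_one]
    calc ΨA.act d b = b * (a * ΨA.act d b) := by rw [← mul_assoc, mul_comm b a, ← hb, one_mul]
      _ = Coalgebra.counit (R := C) d • b := by rw [h1, mul_smul_comm, mul_one]
end

section
/- Let D be a C-bialgebra, (A, Ψ_A) a simple commutative D-module algebra with field of constants k = A^{Ψ_A}, V a C-module, and Ψ_V an (A # D)-module structure on V (i.e. a module structure over the smash product), with restricted D-action Ψ̃_V. Then the natural map A ⊗_k V^{Ψ̃_V} → V is injective. -/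
open TensorProduct

section Defs

variable (C D : Type*) [CommRing C] [Ring D] [Bialgebra C D]

variable (A : Type*) [Ring A] [Algebra C A]

/-- The natural map `A ⊗_k W → V`, `a ⊗ w ↦ a • w`, for a `k`-submodule `W` of `V`. -/
noncomputable def naturalMap (k A' V : Type*) [Field k] [CommRing A'] [Algebra k A']
    [AddCommGroup V] [Module k V] [Module A' V] [IsScalarTower k A' V]
    (W : Submodule k V) : A' ⊗[k] W →ₗ[k] V :=
  TensorProduct.lift
    { toFun := fun a => ((LinearMap.lsmul A' V a).restrictScalars k) ∘ₗ W.subtype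
      map_add' := fun a b => LinearMap.ext fun w => add_smul a b (w : V)
      map_smul' := fun c a => LinearMap.ext fun w => smul_assoc c a (w : V) }

end Defs

/-!
Let `(w i)` be a `k`-basis of the constants `V^D`. Applying `d ∈ D` to an `A`-linear relation
`∑ cᵢ • wᵢ = 0` yields the relation `∑ d(cᵢ) • wᵢ = 0`, so the `j`-th coefficients of relations
supported on a finite set `s` form a `D`-stable ideal of `A`. If some relation on `s` has a nonzero
coefficient, simplicity gives a relation with `cⱼ = 1`; choosing `s` minimal, `d(c) - ε(d) c` is a
relation vanishing at `j`, hence zero, so all `cᵢ` are constants, i.e. lie in `k`, contradicting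
the `k`-linear independence of the `wᵢ`. Thus the `wᵢ` are `A`-linearly independent.
-/

namespace Coalgebra

variable {R A ι : Type*} [CommSemiring R] [AddCommMonoid A] [Module R A] [Coalgebra R A] {a : A}

lemma sum_counit_right_smul (𝓡 : Repr R a ι) :
    ∑ i ∈ 𝓡.index, counit (R := R) (𝓡.right i) • 𝓡.left i = a := by
  simpa only [map_sum, lift.tmul, LinearMap.flip_apply, LinearMap.lsmul_apply, one_smul]
    using congr(lift (LinearMap.lsmul R A).flip $(sum_tmul_counit_eq (R := R) 𝓡))

lemma sum_map_smul_counit_smul {S M : Type*} [Semiring S] [Algebra R S] [AddCommMonoid M]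
    [Module R M] [Module S M] [IsScalarTower R S M] (𝓡 : Repr R a ι) (f : A →ₗ[R] S) (m : M) :
    ∑ i ∈ 𝓡.index, f (𝓡.left i) • counit (R := R) (𝓡.right i) • m = f a • m := by
  calc _ = ∑ i ∈ 𝓡.index, f (counit (R := R) (𝓡.right i) • 𝓡.left i) • m := by
        refine Finset.sum_congr rfl fun i _ => ?_
        rw [map_smul, smul_assoc, smul_comm]
    _ = f a • m := by rw [← Finset.sum_smul, ← map_sum, sum_counit_right_smul]

noncomputable def Repr.uliftFin.{w} (𝓡 : Repr R a ι) :
    Repr R a (ULift.{w} (Fin 𝓡.index.card)) :=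
  letI e : ULift.{w} (Fin 𝓡.index.card) ≃ 𝓡.index := Equiv.ulift.trans 𝓡.index.equivFin.symm
  { index := Finset.univ
    left := fun t => 𝓡.left (e t)
    right := fun t => 𝓡.right (e t)
    eq := by
      rw [← 𝓡.eq, ← Finset.sum_coe_sort 𝓡.index]
      exact Fintype.sum_equiv e _ _ fun _ => rfl }

end Coalgebra

section Relations

variable {A M ι : Type*} [CommRing A] [AddCommGroup M] [Module A M]

def relationCoeffIdeal (w : ι → M) (s : Finset ι) (j : ι) : Ideal A :=
  (LinearMap.ker (∑ i ∈ s, (LinearMap.proj i : (ι → A) →ₗ[A] A).smulRight (w i))).map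
    (LinearMap.proj j)

lemma mem_relationCoeffIdeal {w : ι → M} {s : Finset ι} {j : ι} {x : A} :
    x ∈ relationCoeffIdeal w s j ↔ ∃ c : ι → A, ∑ i ∈ s, c i • w i = 0 ∧ c j = x := by
  simp [relationCoeffIdeal, LinearMap.sum_apply]

lemma LinearIndependent.eq_zero_of_sum_smul_eq_zero_of_mem_range {k : Type*} [CommRing k]
    [Algebra k A] [Module k M] [IsScalarTower k A M] {w : ι → M} (hw : LinearIndependent k w)
    {s : Finset ι} {c : ι → A} (hc : ∀ i ∈ s, c i ∈ Set.range (algebraMap k A))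
    (hrel : ∑ i ∈ s, c i • w i = 0) : ∀ i ∈ s, c i = 0 := by
  classical
  choose μ hμ using hc
  let μ' : ι → k := fun i => if h : i ∈ s then μ i h else 0
  have hμ' : ∀ i ∈ s, algebraMap k A (μ' i) = c i := fun i hi => by simp [μ', hi, hμ]
  have hrel' : ∑ i ∈ s, μ' i • w i = 0 := by
    rw [← hrel]
    exact Finset.sum_congr rfl fun i hi => by rw [← hμ' i hi, algebraMap_smul]
  intro i hi
  rw [← hμ' i hi, linearIndependent_iff'.1 hw s μ' hrel' i hi, map_zero]

end Relations

namespace ModuleAlgebraStructure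

variable {C D A : Type*} [CommRing C] [Ring D] [Bialgebra C D] [CommRing A] [Algebra C A]
  (ΨA : ModuleAlgebraStructure C D A)

def constants : Set A := {a | ∀ d : D, ΨA.act d a = Coalgebra.counit (R := C) d • a}

def IsSimple : Prop := ∀ I : Ideal A, (∀ (d : D), ∀ a ∈ I, ΨA.act d a ∈ I) → I = ⊥ ∨ I = ⊤

lemma one_mem_constants : (1 : A) ∈ ΨA.constants := ΨA.measure_one

variable {M ι : Type*} [AddCommGroup M] [Module A M]

def PreservesRelations (w : ι → M) : Prop :=
  ∀ (d : D) (s : Finset ι) (c : ι → A),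
    ∑ i ∈ s, c i • w i = 0 → ∑ i ∈ s, ΨA.act d (c i) • w i = 0

variable {ΨA} {w : ι → M}

lemma relationCoeffIdeal_stable
    (hstable : ΨA.PreservesRelations w)
    {s : Finset ι} {j : ι} (d : D) {a : A} (ha : a ∈ relationCoeffIdeal w s j) :
    ΨA.act d a ∈ relationCoeffIdeal w s j := by
  obtain ⟨c, hc, rfl⟩ := mem_relationCoeffIdeal.1 ha
  exact mem_relationCoeffIdeal.2 ⟨fun i => ΨA.act d (c i), hstable d s c hc, rfl⟩

lemma mem_constants_of_sum_smul_eq_zero [DecidableEq ι]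
    (hstable : ΨA.PreservesRelations w)
    {s : Finset ι} {j : ι}
    (hmin : ∀ c : ι → A, ∑ i ∈ s.erase j, c i • w i = 0 → ∀ i ∈ s.erase j, c i = 0)
    {c : ι → A} (hc : ∑ i ∈ s, c i • w i = 0) (hcj : c j ∈ ΨA.constants) :
    ∀ i ∈ s, c i ∈ ΨA.constants := by
  intro i hi d
  let c' := fun i => ΨA.act d (c i) - Coalgebra.counit (R := C) d • c i
  have hc'j : c' j = 0 := sub_eq_zero.2 (hcj d)
  have hc' : ∑ i ∈ s.erase j, c' i • w i = 0 := by
    rw [Finset.sum_erase s (by rw [hc'j, zero_smul])]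
    simp only [c', sub_smul, Finset.sum_sub_distrib, hstable d s c hc, Algebra.smul_def, mul_smul,
      ← Finset.smul_sum, hc, smul_zero, sub_zero]
  rcases eq_or_ne i j with rfl | hij
  · exact hcj d
  · exact sub_eq_zero.1 (hmin c' hc' i (Finset.mem_erase.2 ⟨hij, hi⟩))

theorem IsSimple.linearIndependent [Nontrivial A] (hΨ : ΨA.IsSimple) {k : Type*} [CommRing k]
    [Algebra k A] (hk : ΨA.constants ⊆ Set.range (algebraMap k A)) [Module k M]
    [IsScalarTower k A M] (hw : LinearIndependent k w)
    (hstable : ΨA.PreservesRelations w) :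
    LinearIndependent A w := by
  classical
  refine linearIndependent_iff'.2 fun s => ?_
  induction s using Finset.strongInduction with
  | H s ih =>
  intro g hg j hj
  by_contra hgj
  have htop : relationCoeffIdeal w s j = ⊤ :=
    (hΨ _ fun d _ => relationCoeffIdeal_stable hstable d).resolve_left fun hbot => hgj <| by
      rw [← Submodule.mem_bot A, ← hbot]
      exact mem_relationCoeffIdeal.2 ⟨g, hg, rfl⟩
  obtain ⟨c, hc, hcj⟩ := mem_relationCoeffIdeal.1 (htop ▸ Submodule.mem_top :
    (1 : A) ∈ relationCoeffIdeal w s j)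
  have hconst := mem_constants_of_sum_smul_eq_zero hstable (ih _ (Finset.erase_ssubset hj)) hc
    (hcj ▸ ΨA.one_mem_constants)
  exact one_ne_zero <| hcj ▸
    hw.eq_zero_of_sum_smul_eq_zero_of_mem_range (fun i hi => hk (hconst i hi)) hc j hj

end ModuleAlgebraStructure

lemma naturalMap_injective_of_linearIndependent {k A V ι : Type*} [Field k] [CommRing A]
    [Algebra k A] [AddCommGroup V] [Module k V] [Module A V] [IsScalarTower k A V]
    {W : Submodule k V} (b : Module.Basis ι k W) (hb : LinearIndependent A fun i => (b i : V)) :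
    Function.Injective (naturalMap k A V W) := by
  have hmap : naturalMap k A V W = (W.subtype.liftBaseChange A).restrictScalars k :=
    TensorProduct.ext' fun _ _ => rfl
  rw [hmap, LinearMap.coe_restrictScalars]
  have hcomp : W.subtype.liftBaseChange A ∘ b.baseChange A = fun i => (b i : V) := by
    ext i
    simp
  exact LinearMap.injective_of_linearIndependent (b.baseChange A).span_eq (hcomp ▸ hb)

theorem constants_tensor_injective_general
    (C D A k V : Type*) [Field C] [Ring D] [Bialgebra C D] [CommRing A] [Algebra C A]
    [Nontrivial A] (ΨA : ModuleAlgebraStructure C D A)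
    (hsimple : ∀ I : Ideal A, (∀ (d : D), ∀ a ∈ I, ΨA.act d a ∈ I) → I = ⊥ ∨ I = ⊤)
    [Field k] [Algebra k A]
    (hk : Set.range (algebraMap k A) =
      {a : A | ∀ d : D, ΨA.act d a = Coalgebra.counit (R := C) d • a})
    [AddCommGroup V] [Module C V] [Module A V] [Module k V]
    [IsScalarTower k A V] [IsScalarTower C A V]
    (Φ : D →ₗ[C] V →ₗ[C] V)
    (hsmash : ∀ (d : D) (a : A) (v : V) {ι : Type _} (rep : Coalgebra.Repr C d ι),
      Φ d (a • v) = ∑ i ∈ rep.index, ΨA.act (rep.left i) a • Φ (rep.right i) v)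
    (W : Submodule k V)
    (hW : (W : Set V) = {v : V | ∀ d : D, Φ d v = Coalgebra.counit (R := C) d • v}) :
    Function.Injective (naturalMap k A V W) := by
  let b := Module.Basis.ofVectorSpace k W
  have hb_const (i) : ∀ d : D, Φ d (b i) = Coalgebra.counit (R := C) d • (b i : V) :=
    (Set.ext_iff.1 hW (b i)).1 (b i).2
  have hsmash_const (i) (d : D) (a : A) : Φ d (a • (b i : V)) = ΨA.act d a • (b i : V) := by
    -- `hsmash` only accepts index types in its own universe
    rw [hsmash d a _ (Coalgebra.Repr.arbitrary C d).uliftFin]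
    simp_rw [hb_const i]
    exact Coalgebra.sum_map_smul_counit_smul _ (ΨA.act.flip a) _
  refine naturalMap_injective_of_linearIndependent b <|
    ModuleAlgebraStructure.IsSimple.linearIndependent hsimple hk.ge
      (b.linearIndependent.map' W.subtype W.ker_subtype) fun d s c hc => ?_
  simpa only [map_sum, hsmash_const, map_zero] using congr(Φ d $hc)

/-- let `(A, Ψ_A)` be a simple commutative `D`-module algebra over a field
`C`, with field of constants `k = A^{Ψ_A}` (realized as a field `k` with
`Set.range (algebraMap k A)` equal to the set of constants), and let `V` be a module over
the smash product `A # D`, i.e. an `A`-module with a `D`-action `Φ` satisfying the smash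
relation `Φ(d)(a • v) = Σ Ψ_A(d₍₁₎ ⊗ a) • Φ(d₍₂₎)(v)`.  If `W` is the `k`-submodule of
constants `V^{Φ}` of `V`, then the natural map `A ⊗_k W → V`, `a ⊗ w ↦ a • w`, is
injective. -/
theorem constants_tensor_injective
    (C D A k V : Type*) [Field C] [Ring D] [Bialgebra C D] [CommRing A] [Algebra C A]
    [Nontrivial A] (ΨA : ModuleAlgebraStructure C D A)
    (hsimple : ∀ I : Ideal A, (∀ (d : D), ∀ a ∈ I, ΨA.act d a ∈ I) → I = ⊥ ∨ I = ⊤)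
    [Field k] [Algebra C k] [Algebra k A] [IsScalarTower C k A]
    (hk : Set.range (algebraMap k A) =
      {a : A | ∀ d : D, ΨA.act d a = Coalgebra.counit (R := C) d • a})
    [AddCommGroup V] [Module C V] [Module A V] [Module k V]
    [IsScalarTower k A V] [IsScalarTower C A V]
    (Φ : D →ₗ[C] V →ₗ[C] V)
    (hone : Φ 1 = LinearMap.id)
    (hmul : ∀ d e : D, Φ (d * e) = Φ d ∘ₗ Φ e)
    (hsmash : ∀ (d : D) (a : A) (v : V) {ι : Type _} (rep : Coalgebra.Repr C d ι),
      Φ d (a • v) = ∑ i ∈ rep.index, ΨA.act (rep.left i) a • Φ (rep.right i) v)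
    (W : Submodule k V)
    (hW : (W : Set V) = {v : V | ∀ d : D, Φ d v = Coalgebra.counit (R := C) d • v}) :
    Function.Injective (naturalMap k A V W) :=
  constants_tensor_injective_general C D A k V ΨA hsimple hk Φ hsmash W hW
end

section
/- Let G be a commutative monoid acting by C-algebra endomorphisms on a commutative D-module algebra R, where D = D¹ # CG is the smash product of a cocommutative Hopf algebra D¹ (on which CG acts) with the monoid bialgebra CG. Then for every g ∈ G, the kernel of the action of g on R is a D-stable ideal. In particular, if R is a simple D-module algebra, every g ∈ G acts injectively on R. -/
open TensorProduct

/-- let `G` be a commutative monoid acting on a commutative `D`-module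
algebra `R`, where `D = D¹ # CG`: the elements of `G` embed into `D` as grouplike
elements via a monoid homomorphism `gl`, and (as in the smash product with `G`
commutative) for every `g ∈ G` and `x ∈ D` there is `y ∈ D` with `gl(g)·x = y·gl(g)`.
Then for every `g ∈ G` the kernel `{a | gl(g).a = 0}` of the action of `g` on `R` is a
`D`-stable ideal of `R`; in particular, if `R` is a simple `D`-module algebra, then every
`g ∈ G` acts injectively on `R`. -/
theorem kernel_of_monoid_action_is_D_stable
    (C D G R : Type*) [Field C] [Ring D] [Bialgebra C D] [CommMonoid G]
    [CommRing R] [Algebra C R] [Nontrivial R]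
    (gl : G →* D)
    (hgrouplike : ∀ g : G, Coalgebra.comul (R := C) (gl g) = gl g ⊗ₜ[C] gl g ∧
      Coalgebra.counit (R := C) (gl g) = 1)
    (hcomm : ∀ (g : G) (x : D), ∃ y : D, gl g * x = y * gl g)
    (ΨR : ModuleAlgebraStructure C D R) :
    (∀ g : G,
      -- the kernel of the action of `g` is an ideal of `R` …
      (∀ a b : R, ΨR.act (gl g) a = 0 → ΨR.act (gl g) b = 0 → ΨR.act (gl g) (a + b) = 0) ∧
      (∀ a r : R, ΨR.act (gl g) a = 0 → ΨR.act (gl g) (r * a) = 0) ∧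
      -- … which is `D`-stable
      (∀ (a : R) (d : D), ΨR.act (gl g) a = 0 → ΨR.act (gl g) (ΨR.act d a) = 0)) ∧
    ((∀ I : Ideal R, (∀ (d : D), ∀ a ∈ I, ΨR.act d a ∈ I) → I = ⊥ ∨ I = ⊤) →
      ∀ g : G, Function.Injective (ΨR.act (gl g))) := by
  have hmul : ∀ (g : G) (a b : R),
      ΨR.act (gl g) (a * b) = ΨR.act (gl g) a * ΨR.act (gl g) b := by
    intro g a b
    rw [ΨR.measure_mul]
    simp [conv, (hgrouplike g).1]
  have hone : ∀ g : G, ΨR.act (gl g) 1 = 1 := by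
    intro g
    rw [ΨR.measure_one, (hgrouplike g).2, one_smul]
  have hstab : ∀ (g : G) (a : R) (d : D),
      ΨR.act (gl g) a = 0 → ΨR.act (gl g) (ΨR.act d a) = 0 := by
    intro g a d ha
    obtain ⟨y, hy⟩ := hcomm g d
    have : (ΨR.act (gl g) ∘ₗ ΨR.act d) a = (ΨR.act y ∘ₗ ΨR.act (gl g)) a := by
      rw [← ΨR.act_mul, ← ΨR.act_mul, hy]
    simpa [ha] using this
  constructor
  · intro g
    refine ⟨fun a b ha hb => by simp [ha, hb], fun a r ha => by
      rw [hmul, ha, mul_zero], hstab g⟩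
  · intro hsimple g
    set I : Ideal R :=
      { carrier := {a | ΨR.act (gl g) a = 0}
        add_mem' := fun ha hb => by simp_all
        zero_mem' := by simp
        smul_mem' := fun r a ha => by
          simp only [Set.mem_setOf_eq, smul_eq_mul] at *
          rw [hmul, ha, mul_zero] } with hI
    have hDst : ∀ (d : D), ∀ a ∈ I, ΨR.act d a ∈ I := fun d a ha => hstab g a d ha
    rcases hsimple I hDst with hbot | htop
    · intro a b hab
      have : a - b ∈ I := by
        show ΨR.act (gl g) (a - b) = 0
        rw [map_sub, hab, sub_self]
      rw [hbot] at this
      exact sub_eq_zero.mp this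
    · exfalso
      have : (1 : R) ∈ I := htop ▸ Submodule.mem_top
      have h1 : ΨR.act (gl g) 1 = 0 := this
      rw [hone] at h1
      exact one_ne_zero h1
end

section
/- Let G_* be the subgroup functor of Γ₁ over ℤ defined by G_*(A) = { (1 + a₁) w : a₁ ∈ N(A) } for every commutative ring A. Then G_*(A) is a subgroup of Γ₁(A) under composition of power series, and G_* is isomorphic as a group functor to the formal multiplicative group Ĝ_m, i.e. G_*(A) ≅ (1 + N(A), ·) naturally in A. -/
open PowerSeries

/-- Membership in `Γ₁(A)`: a power series `φ ∈ A⟦w⟧` with `φ ≡ w mod N(A)⟦w⟧`. -/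
def InGamma1 {A : Type*} [CommRing A] (φ : PowerSeries A) : Prop :=
  ∀ d : ℕ, PowerSeries.coeff d (φ - PowerSeries.X) ∈ nilradical A

/-- `χ = φ ∘ ψ` is the composite (substitution of `ψ` into `φ`): coefficientwise,
`coeff_d χ = Σ_j coeff_j φ · coeff_d (ψ^j)`, the sum being coefficientwise eventually
constant. -/
def IsComp1 {A : Type*} [CommRing A] (φ ψ χ : PowerSeries A) : Prop :=
  ∀ d : ℕ, ∃ M : ℕ, ∀ m ≥ M,
    PowerSeries.coeff d χ =
      ∑ j ∈ Finset.range m, PowerSeries.coeff j φ * PowerSeries.coeff d (ψ ^ j)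

section

variable {A : Type*} [CommRing A]

lemma isComp1_C_mul_X (a b : A) : IsComp1 (C a * X) (C b * X) (C (a * b) * X) := by
  intro d
  refine ⟨2, fun m hm => ?_⟩
  have hpow (j : ℕ) : (C b * X) ^ j = C (b ^ j) * X ^ j := by rw [mul_pow, ← map_pow]
  -- only the linear coefficient of `C a * X` survives
  rw [Finset.sum_eq_single 1]
  · simp only [hpow, pow_one, map_mul, mul_assoc, coeff_C_mul, coeff_X]
    split <;> simp
  · intro j _ hj
    simp [coeff_C_mul, coeff_X, hj]
  · intro h
    simp at h
    omega

lemma isComp1_C_mul_X_of_mul_eq_one {a b : A} (h : a * b = 1) :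
    IsComp1 (C a * X) (C b * X) X := by
  simpa [h] using isComp1_C_mul_X a b

lemma inGamma1_C_one_add_mul_X {a : A} (ha : a ∈ nilradical A) :
    InGamma1 (C (1 + a) * X) := by
  intro d
  rw [map_add, map_one, add_mul, one_mul, add_sub_cancel_left, coeff_C_mul, coeff_X]
  split
  · simpa using ha
  · simp

lemma exists_mem_nilradical_one_add_mul_one_add_eq_one {a : A} (ha : a ∈ nilradical A) :
    ∃ b ∈ nilradical A, (1 + a) * (1 + b) = 1 := by
  obtain ⟨u, hu⟩ := (mem_nilradical.mp ha).isUnit_one_add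
  refine ⟨-a * ↑u⁻¹, Ideal.mul_mem_right _ _ (neg_mem ha), ?_⟩
  linear_combination (a * ↑u⁻¹) * hu - a * u.mul_inv

lemma C_mul_X_injective : Function.Injective fun a : A => C a * X := by
  intro a b h
  simpa using congrArg (coeff 1) h

end

/-- `G_*(A) = { (1 + a₁)·w : a₁ ∈ N(A) }` is a subgroup of `Γ₁(A)` under
composition of power series, and `G_*` is isomorphic, naturally in `A`, to the formal
multiplicative group `Ĝ_m : A ↦ (1 + N(A), ·)`, via `1 + a₁ ↦ (1 + a₁)·w`. -/
theorem Gstar_subgroup_and_iso_formal_multiplicative_group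
    (A : Type*) [CommRing A] :
    -- `G_*(A) ⊆ Γ₁(A)`, and it contains the identity `w`
    (∀ a ∈ nilradical A, InGamma1 (PowerSeries.C (1 + a) * PowerSeries.X)) ∧
    ((0 : A) ∈ nilradical A ∧ PowerSeries.C ((1 : A) + 0) * PowerSeries.X =
      (PowerSeries.X : PowerSeries A)) ∧
    -- closure under composition, realizing multiplication on `1 + N(A)`
    (∀ a ∈ nilradical A, ∀ b ∈ nilradical A,
      a + b + a * b ∈ nilradical A ∧
      (1 + a) * (1 + b) = 1 + (a + b + a * b) ∧
      IsComp1 (PowerSeries.C (1 + a) * PowerSeries.X)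
        (PowerSeries.C (1 + b) * PowerSeries.X)
        (PowerSeries.C ((1 + a) * (1 + b)) * PowerSeries.X)) ∧
    -- inverses
    (∀ a ∈ nilradical A, ∃ b ∈ nilradical A, (1 + a) * (1 + b) = 1 ∧
      IsComp1 (PowerSeries.C (1 + a) * PowerSeries.X)
        (PowerSeries.C (1 + b) * PowerSeries.X) PowerSeries.X ∧
      IsComp1 (PowerSeries.C (1 + b) * PowerSeries.X)
        (PowerSeries.C (1 + a) * PowerSeries.X) PowerSeries.X) ∧
    -- the parametrization `1 + a₁ ↦ (1 + a₁)w` is injective (so it is a group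
    -- isomorphism `(1 + N(A), ·) ≅ G_*(A)`)
    (∀ a ∈ nilradical A, ∀ b ∈ nilradical A,
      PowerSeries.C (1 + a) * PowerSeries.X = PowerSeries.C (1 + b) * PowerSeries.X →
        a = b) ∧
    -- naturality in `A`
    (∀ (B : Type) [CommRing B] (f : A →+* B), ∀ a ∈ nilradical A,
      f a ∈ nilradical B ∧
      PowerSeries.map f (PowerSeries.C (1 + a) * PowerSeries.X) =
        PowerSeries.C (1 + f a) * PowerSeries.X) := by
  refine ⟨fun a ha => inGamma1_C_one_add_mul_X ha, ⟨zero_mem _, by simp⟩, ?closure, ?inverse,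
    ?injective, ?naturality⟩
  case closure =>
    intro a ha b hb
    exact ⟨add_mem (add_mem ha hb) (Ideal.mul_mem_right _ _ ha), by ring,
      isComp1_C_mul_X _ _⟩
  case inverse =>
    intro a ha
    obtain ⟨b, hb, hab⟩ := exists_mem_nilradical_one_add_mul_one_add_eq_one ha
    exact ⟨b, hb, hab, isComp1_C_mul_X_of_mul_eq_one hab,
      isComp1_C_mul_X_of_mul_eq_one (mul_comm (1 + a) _ ▸ hab)⟩
  case injective =>
    intro a _ b _ h
    exact add_left_cancel (C_mul_X_injective h)
  case naturality =>
    intro B _ f a ha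
    exact ⟨mem_nilradical.mpr ((mem_nilradical.mp ha).map f), by simp⟩
end
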